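/- Let V ⊆ ℂ be open and connected and let f : V → ℂ be holomorphic, nonconstant, and algebraic, i.e., there is a nonzero polynomial P₀ ∈ ℂ[X,Y] with P₀(z, f(z)) = 0 for all z ∈ V. Let U ⊆ V be open, connected, and nonempty, and let φ : U → ℂ be holomorphic with conj(φ(z)) ∈ V and conj(f(conj(φ(z))))·f(z) = 1 for all z ∈ U (so that the antiholomorphic map σ(z) = conj(φ(z)) satisfies conj(f(σ(z))) = 1/f(z), as the antiholomorphic Schwarz reflection across a boundary curve on which |f| = 1 does). Then φ is algebraic: there exists a nonzero polynomial Q ∈ ℂ[X,Y] with Q(z, φ(z)) = 0 for all z ∈ U. -/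

import Mathlib

open MeasureTheory Complex ComplexConjugate Metric Set

noncomputable section

/-- `f` belongs to the Bergman space `A²(Ω)`. -/
def BergmanFun (Ω : Set ℂ) (f : ℂ → ℂ) : Prop :=
  DifferentiableOn ℂ f Ω ∧ IntegrableOn (fun z => ‖f z‖ ^ 2) Ω volume

/-- `Ω` is a finitely connected domain none of whose complementary components is a point. -/
def IsFinConnDomain (Ω : Set ℂ) : Prop :=
  IsOpen Ω ∧ IsConnected Ω ∧
  {C : Set ℂ | ∃ x ∈ Ωᶜ, C = connectedComponentIn Ωᶜ x}.Finite ∧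
  ∀ x ∈ Ωᶜ, ¬ (connectedComponentIn Ωᶜ x).Subsingleton

/-- `Ω` is a quadrature domain. -/
def IsQuadratureDomain (Ω : Set ℂ) : Prop :=
  ∃ N : ℕ, 0 < N ∧ ∃ (w : Fin N → ℂ) (n : Fin N → ℕ) (c : Fin N → ℕ → ℂ),
    (∀ j, w j ∈ Ω) ∧
    ∀ f : ℂ → ℂ, BergmanFun Ω f →
      (∫ z in Ω, f z) =
        ∑ j, ∑ k ∈ Finset.range (n j + 1), c j k * iteratedDerivWithin k f Ω (w j)

/-- `fa` is an Ahlfors map of `Ω` at `a`. -/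
def IsAhlforsMap (Ω : Set ℂ) (a : ℂ) (fa : ℂ → ℂ) : Prop :=
  DifferentiableOn ℂ fa Ω ∧ (∀ z ∈ Ω, ‖fa z‖ < 1) ∧
  (deriv fa a).im = 0 ∧ 0 < (deriv fa a).re ∧
  ∀ g : ℂ → ℂ, DifferentiableOn ℂ g Ω → (∀ z ∈ Ω, ‖g z‖ < 1) →
    ‖deriv g a‖ ≤ (deriv fa a).re

/-- `Ω` is bounded with `C^∞` smooth boundary consisting of finitely many disjoint
simple closed curves. -/
def HasSmoothBoundary (Ω : Set ℂ) : Prop :=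
  Bornology.IsBounded Ω ∧
  ∃ (n : ℕ) (γ : Fin n → ℝ → ℂ),
    (∀ i, ContDiff ℝ (⊤ : ℕ∞) (γ i)) ∧
    (∀ i, Function.Periodic (γ i) (2 * Real.pi)) ∧
    (∀ i, InjOn (γ i) (Ico 0 (2 * Real.pi))) ∧
    (∀ i t, deriv (γ i) t ≠ 0) ∧
    (Pairwise fun i j => Disjoint (range (γ i)) (range (γ j))) ∧
    frontier Ω = ⋃ i, range (γ i)

/-- Partial derivative in the `x`-direction of a real-valued function on `ℂ`. -/
def pdx (u : ℂ → ℝ) (z : ℂ) : ℝ := deriv (fun t : ℝ => u (z + (t : ℂ))) 0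

/-- Partial derivative in the `y`-direction of a real-valued function on `ℂ`. -/
def pdy (u : ℂ → ℝ) (z : ℂ) : ℝ := deriv (fun t : ℝ => u (z + (t : ℂ) * Complex.I)) 0

/-- `f` is a proper holomorphic map of `Ω` onto the open unit disc. -/
def IsProperOntoDisc (Ω : Set ℂ) (f : ℂ → ℂ) : Prop :=
  DifferentiableOn ℂ f Ω ∧ f '' Ω = ball (0 : ℂ) 1 ∧
  ∀ L : Set ℂ, L ⊆ ball (0 : ℂ) 1 → IsCompact L → IsCompact (Ω ∩ f ⁻¹' L)

/-- `g` is `(m, δ)`-close to the identity on `closure Ω`. -/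
def CloseToId (Ω : Set ℂ) (m : ℕ) (δ : ℝ) (g : ℂ → ℂ) : Prop :=
  ∀ k ≤ m, ∀ z ∈ closure Ω, ‖iteratedFDeriv ℝ k (fun w => g w - w) z‖ ≤ δ

/-- `σ : [0,1] → ℂ` is a piecewise continuously differentiable curve. -/
def PiecewiseC1On01 (σ : ℝ → ℂ) : Prop :=
  ContinuousOn σ (Icc 0 1) ∧ ∃ s : Finset ℝ, ContDiffOn ℝ 1 σ (Icc (0 : ℝ) 1 \ s)

/-- `Ω` is a generalized quadrature domain. -/
def IsGenQuadratureDomain (Ω : Set ℂ) : Prop :=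
  ∃ (N M : ℕ) (w : Fin N → ℂ) (n : Fin N → ℕ) (c : Fin N → ℕ → ℂ)
    (b : Fin M → ℂ) (σ : Fin M → ℝ → ℂ),
    (∀ j, w j ∈ Ω) ∧
    (∀ m, PiecewiseC1On01 (σ m)) ∧
    (∀ m, ∀ t ∈ Icc (0 : ℝ) 1, σ m t ∈ Ω) ∧
    ∀ f : ℂ → ℂ, BergmanFun Ω f →
      (∫ z in Ω, f z) =
        (∑ j, ∑ k ∈ Finset.range (n j + 1), c j k * iteratedDerivWithin k f Ω (w j)) +
        ∑ m, b m * ∫ t in (0 : ℝ)..1, f (σ m t) * deriv (σ m) t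


namespace Stmt19

def HoloD (U : Set ℂ) : Subalgebra ℂ (U → ℂ) where
  carrier := {x : U → ℂ | ∃ F : ℂ → ℂ, DifferentiableOn ℂ F U ∧ ∀ u : U, x u = F u}
  mul_mem' := by
    rintro x y ⟨F, hF, eF⟩ ⟨G, hG, eG⟩
    exact ⟨fun z => F z * G z, hF.mul hG, fun u => by simp [eF u, eG u]⟩
  add_mem' := by
    rintro x y ⟨F, hF, eF⟩ ⟨G, hG, eG⟩
    exact ⟨fun z => F z + G z, hF.add hG, fun u => by simp [eF u, eG u]⟩
  algebraMap_mem' := fun c => ⟨fun _ => c, differentiableOn_const c, fun _ => rfl⟩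

lemma holoD_nontrivial {U : Set ℂ} (hne : U.Nonempty) : Nontrivial (HoloD U) := by
  refine nontrivial_of_ne 0 1 fun h => ?_
  obtain ⟨z, hz⟩ := hne
  have := congrFun (congrArg Subtype.val h) ⟨z, hz⟩
  simp at this

lemma holoD_noZeroDivisors {U : Set ℂ} (hUo : IsOpen U) (hUc : IsPreconnected U) :
    NoZeroDivisors (HoloD U) := by
  constructor
  intro x y hxy
  by_cases hx : x = 0
  · exact Or.inl hx
  · refine Or.inr ?_
    obtain ⟨F, hF, eF⟩ := x.2
    obtain ⟨G, hG, eG⟩ := y.2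
    have hx' : ∃ u : U, F u ≠ 0 := by
      by_contra h
      push_neg at h
      apply hx
      ext u
      simpa [eF u] using h u
    obtain ⟨u₀, hu₀⟩ := hx'
    have hFG : ∀ u : U, F u * G u = 0 := by
      intro u
      have := congrFun (congrArg Subtype.val hxy) u
      simpa [eF u, eG u] using this
    have hW : IsOpen (U ∩ F ⁻¹' {0}ᶜ) :=
      hF.continuousOn.isOpen_inter_preimage hUo isOpen_compl_singleton
    have hGzero : EqOn G 0 U := by
      apply (hG.analyticOnNhd hUo).eqOn_zero_of_preconnected_of_eventuallyEq_zero hUc u₀.2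
      have hmem : (U ∩ F ⁻¹' {0}ᶜ) ∈ nhds (u₀ : ℂ) := hW.mem_nhds ⟨u₀.2, hu₀⟩
      filter_upwards [hmem] with z hz
      have h0 : F z * G z = 0 := by
        have := hFG ⟨z, hz.1⟩; simpa using this
      simpa using (mul_eq_zero.mp h0).resolve_left hz.2
    ext u
    simpa [eG u] using hGzero u.2

/-- The one-variable reading of `MvPolynomial (Fin 1) ℂ`. -/
def toOneVar : MvPolynomial (Fin 1) ℂ →+* Polynomial ℂ :=
  (MvPolynomial.aeval (fun _ : Fin 1 => (Polynomial.X : Polynomial ℂ))).toRingHom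

def ofOneVar : Polynomial ℂ →+* MvPolynomial (Fin 1) ℂ :=
  Polynomial.eval₂RingHom MvPolynomial.C (MvPolynomial.X 0)

lemma toOneVar_comp_ofOneVar : toOneVar.comp ofOneVar = RingHom.id _ := by
  apply Polynomial.ringHom_ext <;> simp [toOneVar, ofOneVar]

lemma ofOneVar_comp_toOneVar : ofOneVar.comp toOneVar = RingHom.id _ := by
  apply MvPolynomial.ringHom_ext
  · intro a; simp [toOneVar, ofOneVar]
  · intro i
    have : i = 0 := Subsingleton.elim _ _
    subst this
    simp [toOneVar, ofOneVar]

lemma toOneVar_injective : Function.Injective toOneVar := by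
  intro a b h
  have := congrArg ofOneVar h
  simpa [← RingHom.comp_apply, ofOneVar_comp_toOneVar] using this

lemma ofOneVar_injective : Function.Injective ofOneVar := by
  intro a b h
  have := congrArg toOneVar h
  simpa [← RingHom.comp_apply, toOneVar_comp_ofOneVar] using this

lemma eval_fin2 (P : MvPolynomial (Fin 2) ℂ) (a b : ℂ) :
    Polynomial.eval a ((MvPolynomial.finSuccEquiv ℂ 1 P).map (MvPolynomial.eval ![b]))
      = MvPolynomial.eval ![a, b] P := by
  rw [← MvPolynomial.eval_eq_eval_mv_eval']
  have h : (Fin.cons a ![b] : Fin 2 → ℂ) = ![a, b] := by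
    funext i
    fin_cases i <;> rfl
  rw [h]

lemma eval_swap (P : MvPolynomial (Fin 2) ℂ) (a b : ℂ) :
    MvPolynomial.eval ![a, b] (MvPolynomial.rename (Equiv.swap (0 : Fin 2) 1) P)
      = MvPolynomial.eval ![b, a] P := by
  rw [MvPolynomial.eval_rename]
  have h : (![a, b] ∘ (Equiv.swap (0 : Fin 2) 1)) = ![b, a] := by
    funext i
    fin_cases i <;> simp [Equiv.swap_apply_left, Equiv.swap_apply_right]
  rw [h]

lemma eval_map_conj (P : MvPolynomial (Fin 2) ℂ) (v : Fin 2 → ℂ) :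
    MvPolynomial.eval v (MvPolynomial.map (starRingEnd ℂ) P)
      = starRingEnd ℂ (MvPolynomial.eval (fun i => starRingEnd ℂ (v i)) P) := by
  rw [MvPolynomial.eval_map]
  rw [← MvPolynomial.eval₂_id (g := fun i => starRingEnd ℂ (v i)) P,
    MvPolynomial.eval₂_comp_left (starRingEnd ℂ) (RingHom.id ℂ), RingHom.comp_id]
  congr 1
  funext i
  simp

end Stmt19


set_option maxHeartbeats 4000000
set_option synthInstance.maxHeartbeats 400000

open Stmt19 Polynomial

/-- an antiholomorphic Schwarz-reflection-type function attached to a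
nonconstant algebraic holomorphic function is algebraic. -/
theorem stmt_19 (V : Set ℂ) (hVo : IsOpen V) (hVc : IsConnected V)
    (f : ℂ → ℂ) (hf : DifferentiableOn ℂ f V)
    (hnc : ¬ ∃ c : ℂ, ∀ z ∈ V, f z = c)
    (P₀ : MvPolynomial (Fin 2) ℂ) (hP₀ : P₀ ≠ 0)
    (halg : ∀ z ∈ V, MvPolynomial.eval ![z, f z] P₀ = 0)
    (U : Set ℂ) (hUo : IsOpen U) (hUc : IsConnected U) (hUV : U ⊆ V)
    (φ : ℂ → ℂ) (hφ : DifferentiableOn ℂ φ U)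
    (hφV : ∀ z ∈ U, conj (φ z) ∈ V)
    (hrefl : ∀ z ∈ U, conj (f (conj (φ z))) * f z = 1) :
    ∃ Q : MvPolynomial (Fin 2) ℂ, Q ≠ 0 ∧
      ∀ z ∈ U, MvPolynomial.eval ![z, φ z] Q = 0 := by
  classical
  obtain ⟨z₀, hz₀U⟩ := hUc.nonempty
  -- basic facts about f on U
  have fz_ne : ∀ z ∈ U, f z ≠ 0 := by
    intro z hz h0
    have := hrefl z hz
    rw [h0, mul_zero] at this
    exact zero_ne_one this
  have hfU : DifferentiableOn ℂ f U := hf.mono hUV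
  have hinv : DifferentiableOn ℂ (fun z => (f z)⁻¹) U := hfU.inv fz_ne
  have hfnotconstU : ¬ ∃ c : ℂ, ∀ z ∈ U, f z = c := by
    rintro ⟨c, hc⟩
    apply hnc
    refine ⟨c, fun z hz => ?_⟩
    have heq : EqOn f (fun _ => c) V := by
      apply (hf.analyticOnNhd hVo).eqOn_of_preconnected_of_eventuallyEq
        analyticOnNhd_const hVc.isPreconnected (hUV hz₀U)
      filter_upwards [hUo.mem_nhds hz₀U] with w hw using hc w hw
    exact heq hz
  -- the domain of holomorphic functions on U and its fraction field
  haveI : Nontrivial (HoloD U) := holoD_nontrivial hUc.nonempty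
  haveI : NoZeroDivisors (HoloD U) := holoD_noZeroDivisors hUo hUc.isPreconnected
  haveI : IsDomain (HoloD U) := NoZeroDivisors.to_isDomain _
  let L := FractionRing (HoloD U)
  let Ze : HoloD U := ⟨fun u => (u : ℂ), fun z => z, differentiableOn_id, fun _ => rfl⟩
  let Fe : HoloD U := ⟨fun u => f u, f, hfU, fun _ => rfl⟩
  let Ge : HoloD U := ⟨fun u => (f u)⁻¹, fun z => (f z)⁻¹, hinv, fun _ => rfl⟩
  let Φe : HoloD U := ⟨fun u => φ u, φ, hφ, fun _ => rfl⟩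
  let ι : HoloD U →+* L := algebraMap (HoloD U) L
  have ιinj : Function.Injective ι := IsFractionRing.injective _ _
  -- pointwise evaluation ring homs
  let ev : U → (HoloD U →+* ℂ) := fun u =>
    (Pi.evalRingHom (fun _ : U => ℂ) u).comp ((HoloD U).val.toRingHom)
  have ev_apply : ∀ (u : U) (x : HoloD U), ev u x = (x : U → ℂ) u := fun _ _ => rfl
  -- coefficient homs
  let cD : ℂ →+* HoloD U := algebraMap ℂ (HoloD U)
  let cL : ℂ →+* L := ι.comp cD
  have cDinj : Function.Injective cD := RingHom.injective _
  have cLinj : Function.Injective cL := ιinj.comp cDinj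
  have ev_cD : ∀ (u : U) (c : ℂ), ev u (cD c) = c := fun _ _ => rfl
  -- evaluation of one-variable polynomials at Ze
  let aZ : Polynomial ℂ →+* HoloD U := Polynomial.eval₂RingHom cD Ze
  let aZL : Polynomial ℂ →+* L := Polynomial.eval₂RingHom cL (ι Ze)
  have aZL_eq : aZL = ι.comp aZ := by
    apply Polynomial.ringHom_ext <;> simp [aZ, aZL, cL]
  have hιaZ : ∀ p, ι (aZ p) = aZL p := fun p => (RingHom.congr_fun aZL_eq p).symm
  have ev_aZ : ∀ u : U, (ev u).comp aZ = Polynomial.evalRingHom (u : ℂ) := by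
    intro u
    apply Polynomial.ringHom_ext
    · intro a
      show ev u (Polynomial.eval₂ cD Ze (Polynomial.C a)) = Polynomial.eval (u : ℂ) (Polynomial.C a)
      rw [Polynomial.eval₂_C, Polynomial.eval_C]; exact ev_cD u a
    · simp [aZ, ev_apply, Ze]
  have hUinf : U.Infinite :=
    Set.Infinite.mono (subset_refl U) (infinite_of_mem_nhds z₀ (hUo.mem_nhds hz₀U))
  have Ztrans : ∀ p : Polynomial ℂ, aZL p = 0 → p = 0 := by
    intro p hp
    have hD : aZ p = 0 := by
      apply ιinj
      rw [hιaZ, hp, map_zero]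
    have hroots : ∀ z ∈ U, Polynomial.eval z p = 0 := by
      intro z hz
      have := congrArg (ev ⟨z, hz⟩) hD
      rw [map_zero] at this
      rw [show ev ⟨z, hz⟩ (aZ p) = Polynomial.evalRingHom (z : ℂ) p from
        RingHom.congr_fun (ev_aZ ⟨z, hz⟩) p] at this
      exact this
    exact Polynomial.eq_zero_of_infinite_isRoot p (hUinf.mono fun z hz => hroots z hz)
  have aZLinj : Function.Injective aZL := by
    intro p q h
    have := Ztrans (p - q) (by rw [map_sub, h, sub_self])
    exact sub_eq_zero.mp this
  -- the rational function field, acting on L through z ↦ Ze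
  let K := FractionRing (Polynomial ℂ)
  letI : Algebra (Polynomial ℂ) L := aZL.toAlgebra
  let ιK : K →+* L := IsFractionRing.lift aZLinj
  letI : Algebra K L := ιK.toAlgebra
  haveI : IsScalarTower (Polynomial ℂ) K L :=
    IsScalarTower.of_algebraMap_eq fun p => (IsFractionRing.lift_algebraMap aZLinj p).symm
  have halgKL : algebraMap (Polynomial ℂ) L = aZL := rfl
  -- zero test for elements of HoloD U
  have hzero : ∀ x : HoloD U, (∀ u : U, ev u x = 0) → x = 0 := by
    intro x hx; apply Subtype.ext; funext u; exact hx u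
  -- key evaluation computation
  have key : ∀ (S : Polynomial (MvPolynomial (Fin 1) ℂ)) (g x : HoloD U) (u : U),
      ev u (Polynomial.eval₂ (MvPolynomial.eval₂Hom cD (fun _ : Fin 1 => g)) x S)
        = Polynomial.eval ((x : U → ℂ) u)
            (S.map (MvPolynomial.eval ![(g : U → ℂ) u])) := by
    intro S g x u
    rw [Polynomial.hom_eval₂]
    rw [show (ev u).comp (MvPolynomial.eval₂Hom cD fun _ : Fin 1 => g)
        = (MvPolynomial.eval ![(g : U → ℂ) u] : MvPolynomial (Fin 1) ℂ →+* ℂ) from ?_]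
    · rw [Polynomial.eval₂_eq_eval_map, ev_apply]
    · apply MvPolynomial.ringHom_ext
      · intro a; simp [ev_cD]
      · intro i
        have : i = 0 := Subsingleton.elim _ _
        subst this
        simp [ev_apply]
  -- Fe is algebraic over K
  let swapP : MvPolynomial (Fin 2) ℂ := MvPolynomial.rename (Equiv.swap 0 1) P₀
  let P1 : Polynomial (MvPolynomial (Fin 1) ℂ) := MvPolynomial.finSuccEquiv ℂ 1 swapP
  have hP1 : P1 ≠ 0 := by
    intro h
    apply hP₀
    have h1 : swapP = 0 := by
      apply (MvPolynomial.finSuccEquiv ℂ 1).injective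
      simpa [P1] using h
    have h2 := MvPolynomial.rename_injective (R := ℂ)
      (Equiv.swap (0 : Fin 2) 1) (Equiv.swap (0 : Fin 2) 1).injective
    apply h2
    simpa [swapP] using h1
  let pC : Polynomial (Polynomial ℂ) := P1.map toOneVar
  have hpC : pC ≠ 0 := fun h =>
    hP1 (Polynomial.map_injective _ toOneVar_injective (by simpa [pC] using h))
  let pK : Polynomial K := pC.map (algebraMap (Polynomial ℂ) K)
  have hpK : pK ≠ 0 := fun h =>
    hpC (Polynomial.map_injective _ (IsFractionRing.injective _ _) (by simpa [pK] using h))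
  have hFeD : Polynomial.eval₂ (MvPolynomial.eval₂Hom cD (fun _ : Fin 1 => Ze)) Fe P1 = 0 := by
    apply hzero
    intro u
    rw [key P1 Ze Fe u]
    have h1 : Polynomial.eval ((Fe : U → ℂ) u) (P1.map (MvPolynomial.eval ![(Ze : U → ℂ) u]))
        = MvPolynomial.eval (Fin.cons ((Fe : U → ℂ) u) ![(Ze : U → ℂ) u]) swapP :=
      (MvPolynomial.eval_eq_eval_mv_eval' _ _ _).symm
    rw [h1]
    show MvPolynomial.eval _ (MvPolynomial.rename (Equiv.swap (0 : Fin 2) 1) P₀) = 0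
    rw [MvPolynomial.eval_rename]
    have h2 : (Fin.cons ((Fe : U → ℂ) u) ![(Ze : U → ℂ) u]) ∘ (Equiv.swap (0 : Fin 2) 1)
        = ![(u : ℂ), f u] := by
      funext i
      fin_cases i <;> simp [Fe, Ze, Equiv.swap_apply_left, Equiv.swap_apply_right]
    rw [h2]
    exact halg _ (hUV u.2)
  have hcompFe : ι.comp (MvPolynomial.eval₂Hom cD fun _ : Fin 1 => Ze) = aZL.comp toOneVar := by
    apply MvPolynomial.ringHom_ext
    · intro a; simp [aZL, cL, toOneVar]
    · intro i
      have : i = 0 := Subsingleton.elim _ _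
      subst this
      simp [aZL, toOneVar]
  have hFeK : Polynomial.aeval (R := K) (ι Fe) pK = 0 := by
    rw [Polynomial.aeval_def]
    show Polynomial.eval₂ (algebraMap K L) (ι Fe) (pC.map (algebraMap (Polynomial ℂ) K)) = 0
    rw [Polynomial.eval₂_map, ← IsScalarTower.algebraMap_eq (Polynomial ℂ) K L, halgKL]
    show Polynomial.eval₂ aZL (ι Fe) (P1.map toOneVar) = 0
    rw [Polynomial.eval₂_map, ← hcompFe, ← Polynomial.hom_eval₂, hFeD, map_zero]
  have hFeInt : IsIntegral K (ι Fe) := isAlgebraic_iff_isIntegral.mp ⟨pK, hpK, hFeK⟩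
  let E := IntermediateField.adjoin K {ι Fe}
  haveI : FiniteDimensional K E := IntermediateField.adjoin.finiteDimensional hFeInt
  have hFeGe : Fe * Ge = 1 := by
    apply Subtype.ext; funext u
    exact mul_inv_cancel₀ (fz_ne u u.2)
  have hGeinv : ι Ge = (ι Fe)⁻¹ := by
    apply eq_inv_of_mul_eq_one_left
    rw [mul_comm, ← map_mul, hFeGe, map_one]
  have hHlmem : ι Ge ∈ E := by
    rw [hGeinv]
    exact inv_mem (IntermediateField.mem_adjoin_simple_self K (ι Fe))
  -- the conjugate-reflection relation
  have hPbrel : ∀ z ∈ U,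
      MvPolynomial.eval ![φ z, (f z)⁻¹] (MvPolynomial.map (starRingEnd ℂ) P₀) = 0 := by
    intro z hz
    rw [eval_map_conj]
    have hv : (fun i => starRingEnd ℂ (![φ z, (f z)⁻¹] i))
        = ![conj (φ z), f (conj (φ z))] := by
      funext i
      fin_cases i
      · rfl
      · show conj ((f z)⁻¹) = f (conj (φ z))
        have h1 : conj (f (conj (φ z))) = (f z)⁻¹ := eq_inv_of_mul_eq_one_left (hrefl z hz)
        rw [← h1, Complex.conj_conj]
    rw [hv, halg _ (hφV z hz), map_zero]
  set Pb : MvPolynomial (Fin 2) ℂ := MvPolynomial.map (starRingEnd ℂ) P₀ with hPbdef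
  set S₀ : Polynomial (MvPolynomial (Fin 1) ℂ) := MvPolynomial.finSuccEquiv ℂ 1 Pb with hS₀def
  have hPbne : Pb ≠ 0 := by
    intro h
    apply hP₀
    apply MvPolynomial.map_injective (starRingEnd ℂ) (starRingEnd ℂ).injective
    simpa [hPbdef] using h
  have hS₀ne : S₀ ≠ 0 := by
    intro h
    apply hPbne
    apply (MvPolynomial.finSuccEquiv ℂ 1).injective
    simpa [hS₀def] using h
  -- the relation in the ring of holomorphic functions
  have hS₀D : Polynomial.eval₂ (MvPolynomial.eval₂Hom cD (fun _ : Fin 1 => Ge)) Φe S₀ = 0 := by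
    apply hzero
    intro u
    rw [key S₀ Ge Φe u, hS₀def, eval_fin2]
    exact hPbrel _ u.2
  -- coefficients in the intermediate field E
  have hcLmem : ∀ c : ℂ, cL c ∈ E := by
    intro c
    have h1 : cL c = algebraMap K L (algebraMap (Polynomial ℂ) K (Polynomial.C c)) := by
      rw [← IsScalarTower.algebraMap_apply, halgKL]
      simp [aZL]
    rw [h1]
    exact E.algebraMap_mem _
  let cE : ℂ →+* E :=
    { toFun := fun c => ⟨cL c, hcLmem c⟩
      map_one' := by ext; simp
      map_mul' := fun a b => by ext; simp
      map_zero' := by ext; simp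
      map_add' := fun a b => by ext; simp }
  let HE : E := ⟨ι Ge, hHlmem⟩
  let hE : MvPolynomial (Fin 1) ℂ →+* E := MvPolynomial.eval₂Hom cE (fun _ => HE)
  have hcompS : (algebraMap E L).comp hE
      = MvPolynomial.eval₂Hom cL (fun _ : Fin 1 => ι Ge) := by
    apply MvPolynomial.ringHom_ext
    · intro a
      rw [RingHom.comp_apply, MvPolynomial.eval₂Hom_C, MvPolynomial.eval₂Hom_C]
      rfl
    · intro i
      rw [RingHom.comp_apply, MvPolynomial.eval₂Hom_X', MvPolynomial.eval₂Hom_X']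
      rfl
  have hcompS2 : ι.comp (MvPolynomial.eval₂Hom cD (fun _ : Fin 1 => Ge))
      = MvPolynomial.eval₂Hom cL (fun _ : Fin 1 => ι Ge) := by
    apply MvPolynomial.ringHom_ext
    · intro a
      rw [RingHom.comp_apply, MvPolynomial.eval₂Hom_C, MvPolynomial.eval₂Hom_C]
      rfl
    · intro i
      rw [RingHom.comp_apply, MvPolynomial.eval₂Hom_X', MvPolynomial.eval₂Hom_X']
  have hS'rel : Polynomial.aeval (R := E) (ι Φe) (S₀.map hE) = 0 := by
    rw [Polynomial.aeval_def, Polynomial.eval₂_map, hcompS, ← hcompS2,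
      ← Polynomial.hom_eval₂, hS₀D, map_zero]
  -- the polynomial over E is nonzero
  have hS'ne : S₀.map hE ≠ 0 := by
    intro h
    have hc : S₀.coeff S₀.natDegree ≠ 0 := by
      rw [← Polynomial.leadingCoeff]
      exact Polynomial.leadingCoeff_ne_zero.mpr hS₀ne
    have h0 : hE (S₀.coeff S₀.natDegree) = 0 := by
      have h1 := congrArg (fun p : Polynomial E => p.coeff S₀.natDegree) h
      simpa [Polynomial.coeff_map] using h1
    have h0L : MvPolynomial.eval₂Hom cL (fun _ : Fin 1 => ι Ge) (S₀.coeff S₀.natDegree) = 0 := by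
      rw [← hcompS, RingHom.comp_apply, h0, map_zero]
    have hcomp3 : (Polynomial.eval₂RingHom cL (ι Ge)).comp toOneVar
        = MvPolynomial.eval₂Hom cL (fun _ : Fin 1 => ι Ge) := by
      apply MvPolynomial.ringHom_ext
      · intro a; simp [toOneVar]
      · intro i
        have : i = 0 := Subsingleton.elim _ _
        subst this
        simp [toOneVar]
    have haL : Polynomial.eval₂ cL (ι Ge) (toOneVar (S₀.coeff S₀.natDegree)) = 0 := by
      rw [show Polynomial.eval₂ cL (ι Ge) (toOneVar (S₀.coeff S₀.natDegree))
          = (Polynomial.eval₂RingHom cL (ι Ge)).comp toOneVar (S₀.coeff S₀.natDegree) from rfl,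
        hcomp3]
      exact h0L
    set a : Polynomial ℂ := toOneVar (S₀.coeff S₀.natDegree) with hadef
    have hane : a ≠ 0 := by
      intro h'
      exact hc (toOneVar_injective (by simpa [hadef] using h'))
    have hfac := Polynomial.Splits.eq_prod_roots
      (IsAlgClosed.splits a)
    have h2 := congrArg (Polynomial.eval₂RingHom cL (ι Ge)) hfac
    rw [map_mul, map_multiset_prod] at h2
    have h3 : Polynomial.eval₂RingHom cL (ι Ge) a = 0 := haL
    rw [h3] at h2
    have h4 : (Multiset.map (⇑(Polynomial.eval₂RingHom cL (ι Ge)))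
        (Multiset.map (fun r => Polynomial.X - Polynomial.C r) a.roots)).prod = 0 := by
      have h5 : Polynomial.eval₂RingHom cL (ι Ge) (Polynomial.C a.leadingCoeff)
          = cL a.leadingCoeff := by simp
      have hlc : cL a.leadingCoeff ≠ 0 := by
        intro h6
        exact Polynomial.leadingCoeff_ne_zero.mpr hane (cLinj (by rw [h6, map_zero]))
      rcases mul_eq_zero.mp h2.symm with h7 | h7
      · exact absurd (h5 ▸ h7) hlc
      · exact h7
    obtain ⟨b, hb, hb0⟩ := Multiset.mem_map.mp (Multiset.prod_eq_zero_iff.mp h4)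
    obtain ⟨r, _, hr⟩ := Multiset.mem_map.mp hb
    have h8 : ι Ge - cL r = 0 := by
      rw [← hb0, ← hr]
      simp
    have h9 : Ge = cD r := ιinj (by rw [sub_eq_zero] at h8; exact h8)
    apply hfnotconstU
    refine ⟨r⁻¹, fun z hz => ?_⟩
    have h10 := congrFun (congrArg Subtype.val h9) ⟨z, hz⟩
    have h11 : (f z)⁻¹ = r := h10
    rw [← h11, inv_inv]
  -- transitivity: φ is algebraic over K, hence over ℂ[X]
  haveI : Algebra.IsIntegral K E := Algebra.IsIntegral.of_finite K E
  have hΦK : IsIntegral K (ι Φe) :=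
    isIntegral_trans _ (isAlgebraic_iff_isIntegral.mp ⟨S₀.map hE, hS'ne, hS'rel⟩)
  have hΦCX : IsAlgebraic (Polynomial ℂ) (ι Φe) :=
    (IsFractionRing.isAlgebraic_iff (Polynomial ℂ) K L).mpr hΦK.isAlgebraic
  obtain ⟨q, hq0, hq⟩ := hΦCX
  have hqD : Polynomial.eval₂ aZ Φe q = 0 := by
    apply ιinj
    rw [map_zero, Polynomial.hom_eval₂, ← aZL_eq]
    rw [Polynomial.aeval_def, halgKL] at hq
    exact hq
  have hqpt : ∀ z, ∀ hz : z ∈ U, Polynomial.eval₂ (Polynomial.evalRingHom z) (φ z) q = 0 := by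
    intro z hz
    have h1 := congrArg (ev ⟨z, hz⟩) hqD
    rw [map_zero, Polynomial.hom_eval₂, ev_aZ] at h1
    exact h1
  -- assemble the two-variable polynomial
  refine ⟨MvPolynomial.rename (Equiv.swap 0 1)
    ((MvPolynomial.finSuccEquiv ℂ 1).symm (q.map ofOneVar)), ?_, ?_⟩
  · intro h
    apply hq0
    have h1 : (MvPolynomial.finSuccEquiv ℂ 1).symm (q.map ofOneVar) = 0 :=
      MvPolynomial.rename_injective _ (Equiv.swap (0 : Fin 2) 1).injective (by simpa using h)
    have h2 : q.map ofOneVar = 0 := by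
      have h3 := congrArg (MvPolynomial.finSuccEquiv ℂ 1) h1
      simpa using h3
    exact Polynomial.map_injective _ ofOneVar_injective (by simpa using h2)
  · intro z hz
    rw [eval_swap, ← eval_fin2, AlgEquiv.apply_symm_apply, Polynomial.map_map,
      Polynomial.eval_map]
    rw [show ((MvPolynomial.eval ![z] : MvPolynomial (Fin 1) ℂ →+* ℂ)).comp ofOneVar
        = Polynomial.evalRingHom z from ?_]
    · exact hqpt z hz
    · apply Polynomial.ringHom_ext <;> simp [ofOneVar]
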